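/- arXiv:2002.09885 — 4 statements merged into one kernel-verified Lean document; each statement's English description precedes it below -/
import Mathlib

section
/- Let (m';p';z') and (m;p;z) be signatures in S_n (i.e., triples of naturals with 0 ≤ z ≤ m ≤ n and 0 ≤ p ≤ n), with (m';p';z') ≠ (m;p;z). Then there exist nonnegative integers e₀, e₁ with e₀ + e₁ ≤ p', m = m' + e₀ + e₁, z = e₁, and p = z' + 2(p' − e₀ − e₁), if and only if all four conditions hold: (1) 2m' + 2p' + z' = 2m + p, (2) m' + p' ≥ m, (3) m' ≤ m − z, (4) (p',z') ≠ (0,0). -/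
/-- Characterization of the expansion relation between distinct signatures. -/
theorem expansion_characterization (n m' p' z' m p z : ℕ)
    (hS' : z' ≤ m' ∧ m' ≤ n ∧ p' ≤ n) (hS : z ≤ m ∧ m ≤ n ∧ p ≤ n)
    (hne : (m', p', z') ≠ (m, p, z)) :
    (∃ e0 e1 : ℕ, e0 + e1 ≤ p' ∧ m = m' + e0 + e1 ∧ z = e1 ∧
        p = z' + 2 * (p' - e0 - e1)) ↔
    (2 * m' + 2 * p' + z' = 2 * m + p ∧ m' + p' ≥ m ∧ m' ≤ m - z ∧
        (p', z') ≠ (0, 0)) := by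
  have hne' : ¬(m' = m ∧ p' = p ∧ z' = z) := by simpa [Prod.ext_iff] using hne
  constructor
  · rintro ⟨e0, e1, h1, h2, h3, h4⟩
    refine ⟨by omega, by omega, by omega, ?_⟩
    simp only [ne_eq, Prod.mk.injEq, not_and]
    omega
  · rintro ⟨h1, h2, h3, h4⟩
    exact ⟨m - z - m', z, by omega, by omega, rfl, by omega⟩
end

section
/- If α = (m;p;z) ∈ I(d), then the set of immediate predecessors P(α) = {α' ∈ S_n : α' → α} equals {(m';p';z') ∈ I'(d) : m' + p' ≥ m and m' ≤ m − z}; in particular P(α) ⊆ I'(d) where d = 2m + p. -/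
/-- The signature set `S_n`: triples (m; p; z) with z ≤ m ≤ n and p ≤ n. -/
def SigSet (n : ℕ) : Set (ℕ × ℕ × ℕ) :=
  {a | a.2.2 ≤ a.1 ∧ a.1 ≤ n ∧ a.2.1 ≤ n}

/-- The expansion relation (m';p';z') → (m;p;z) on `S_n`. -/
def Expand (n : ℕ) (a' a : ℕ × ℕ × ℕ) : Prop :=
  a' ∈ SigSet n ∧ a ∈ SigSet n ∧ a' ≠ a ∧
  ∃ e0 e1 : ℕ, e0 + e1 ≤ a'.2.1 ∧ a.1 = a'.1 + e0 + e1 ∧ a.2.2 = e1 ∧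
    a.2.1 = a'.2.2 + 2 * (a'.2.1 - e0 - e1)

/-- I(d) = {(m;p;z) ∈ S_n : 2m + p = d}. -/
def Iset (n d : ℕ) : Set (ℕ × ℕ × ℕ) :=
  {a ∈ SigSet n | 2 * a.1 + a.2.1 = d}

/-- I'(d) = {(m';p';z') ∈ S_n : 2m' + 2p' + z' = d and (p',z') ≠ (0,0)}. -/
def Iset' (n d : ℕ) : Set (ℕ × ℕ × ℕ) :=
  {a ∈ SigSet n | 2 * a.1 + 2 * a.2.1 + a.2.2 = d ∧ (a.2.1, a.2.2) ≠ (0, 0)}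

/-- The immediate predecessor set P(α) = {α' : α' → α}. -/
def Pred (n : ℕ) (a : ℕ × ℕ × ℕ) : Set (ℕ × ℕ × ℕ) :=
  {a' | Expand n a' a}

/-- For α = (m;p;z) ∈ I(d), P(α) = {(m';p';z') ∈ I'(d) : m'+p' ≥ m, m' ≤ m−z};
in particular P(α) ⊆ I'(d). -/
theorem pred_eq_Iset'_filter (n d m p z : ℕ) (hα : (m, p, z) ∈ Iset n d) :
    Pred n (m, p, z) =
      {a' ∈ Iset' n d | a'.1 + a'.2.1 ≥ m ∧ a'.1 ≤ m - z} ∧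
    Pred n (m, p, z) ⊆ Iset' n d := by
  simp only [Iset, SigSet, Set.mem_sep_iff, Set.mem_setOf_eq] at hα
  obtain ⟨⟨hzm, hmn, hpn⟩, hd⟩ := hα
  have key : Pred n (m, p, z) =
      {a' ∈ Iset' n d | a'.1 + a'.2.1 ≥ m ∧ a'.1 ≤ m - z} := by
    ext ⟨m', p', z'⟩
    simp only [Pred, Expand, Iset', SigSet, Set.mem_setOf_eq, Set.mem_sep_iff,
      ne_eq, Prod.mk.injEq, not_and]
    constructor
    · rintro ⟨⟨hz'm', hm'n, hp'n⟩, -, hne, e0, e1, he, hm, hz, hp⟩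
      exact ⟨⟨⟨hz'm', hm'n, hp'n⟩, by omega, by omega⟩, by omega, by omega⟩
    · rintro ⟨⟨⟨hz'm', hm'n, hp'n⟩, hd', hne⟩, h1, h2⟩
      exact ⟨⟨hz'm', hm'n, hp'n⟩, ⟨hzm, hmn, hpn⟩, by omega, m - m' - z, z,
        by omega, by omega, rfl, by omega⟩
  exact ⟨key, by rw [key]; exact fun a ha => ha.1⟩
end

section
/- The expansion relation → on S_n is well-founded (equivalently, the directed graph on S_n with edges given by → is acyclic): there is no infinite descending chain, since along any edge (m';p';z') → (m;p;z) the quantity 2m + p strictly decreases when traversed backwards, i.e., 2m' + p' < 2m + p, where (p',z') ≠ (0,0) is forced by the expansion relation. -/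
/-- The expansion relation is well-founded: the graph is acyclic since along
any edge the quantity 2m + p strictly decreases when traversed backwards. -/
theorem expand_wellFounded (n : ℕ) :
    (∀ a' a : ℕ × ℕ × ℕ, Expand n a' a →
      2 * a'.1 + a'.2.1 < 2 * a.1 + a.2.1) ∧
    WellFounded (fun a' a => Expand n a' a) := by
  have key : ∀ a' a : ℕ × ℕ × ℕ, Expand n a' a →
      2 * a'.1 + a'.2.1 < 2 * a.1 + a.2.1 := by
    rintro ⟨m', p', z'⟩ ⟨m, p, z⟩ ⟨_, _, hne, e0, e1, hle, hm, hz, hp⟩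
    simp only at hm hz hp hne hle ⊢
    subst hm hz hp
    rcases Nat.eq_zero_or_pos (p' + z') with h | h
    · obtain ⟨hp0, hz0⟩ := Nat.add_eq_zero.mp h
      subst hp0 hz0
      obtain ⟨rfl, rfl⟩ : e0 = 0 ∧ z = 0 := by omega
      simp_all [Prod.ext_iff]
    · omega
  refine ⟨key, Subrelation.wf (r := InvImage (· < ·) (fun a : ℕ × ℕ × ℕ => 2 * a.1 + a.2.1))
    (fun h => key _ _ h) (InvImage.wf _ Nat.lt_wfRel.wf)⟩
end

section
/- For fixed d, define M over pairs (i,j) with 0 ≤ j ≤ i ≤ r = ⌊d/2⌋ by M_{i,j} = V(j; i−j; d−2i) + C·W_{j−(d−2i), j} when valid (∞ if i = j = d/2 or indices invalid), where V is any function on signatures. Then for α = (m;p;z) ∈ I(d), min_{α' ∈ P(α)} (V(α') + C·W_{m'−z', m'}) = min{M_{i,j} : m ≤ i ≤ r, 0 ≤ j ≤ m−z}, i.e., the minimization over predecessors equals a rectangular range minimum query in M. -/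
open scoped Classical

/-!
Under the change of variables `(m'; p'; z') ↦ (i, j) = (m' + p', m')`, whose inverse on `I'(d)` is
`(i, j) ↦ (j; i - j; d - 2i)`, the predecessors of `(m; p; z) ∈ I(d)` are exactly the valid entries
of the rectangle `m ≤ i ≤ ⌊d/2⌋`, `j ≤ m - z`; every other entry of that rectangle is `⊤` and does
not affect the infimum.
-/

theorem mem_pred_iff {n d m q z : ℕ} (hα : (m, q, z) ∈ Iset n d) {a : ℕ × ℕ × ℕ} :
    a ∈ Pred n (m, q, z) ↔ a ∈ Iset' n d ∧ m ≤ a.1 + a.2.1 ∧ a.1 ≤ m - z := by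
  obtain ⟨⟨hzm, hmn, hqn⟩, hd⟩ := hα
  obtain ⟨m', p', z'⟩ := a
  simp only [Pred, Expand, Iset', SigSet, Set.mem_ofPred_eq, ne_eq, Prod.mk.injEq] at *
  constructor
  · rintro ⟨ha, -, hne, e0, e1, he, rfl, rfl, rfl⟩
    exact ⟨⟨ha, by omega, by omega⟩, by omega, by omega⟩
  · rintro ⟨⟨ha, hd', hne⟩, hm, hz⟩
    exact ⟨ha, ⟨hzm, hmn, hqn⟩, by omega, m - z - m', z, by omega, by omega, rfl, by omega⟩

section RangeMinimum

variable {α : Type*}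

noncomputable def rmqMatrix [Top α] (n d : ℕ) (f : ℕ × ℕ × ℕ → α) (i j : ℕ) : α :=
  if (j, i - j, d - 2 * i) ∈ Iset' n d ∧ j ≤ i ∧ i ≤ d / 2 then f (j, i - j, d - 2 * i) else ⊤

theorem rmqMatrix_add_fst [Top α] {n d : ℕ} (f : ℕ × ℕ × ℕ → α) {a : ℕ × ℕ × ℕ}
    (ha : a ∈ Iset' n d) : rmqMatrix n d f (a.1 + a.2.1) a.1 = f a := by
  obtain ⟨m', p', z'⟩ := a
  have hd : 2 * m' + 2 * p' + z' = d := ha.2.1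
  have hp : m' + p' - m' = p' := by omega
  have hz : d - 2 * (m' + p') = z' := by omega
  dsimp only
  rw [rmqMatrix, hp, hz, if_pos ⟨ha, by omega, by omega⟩]

theorem sInf_eq_of_subset_of_subset_insert_top [CompleteLattice α] {s t : Set α} (hst : s ⊆ t)
    (hts : t ⊆ insert ⊤ s) : sInf t = sInf s :=
  le_antisymm (sInf_le_sInf hst) <| by
    simpa only [sInf_insert, top_inf_eq] using sInf_le_sInf hts

theorem sInf_pred_eq_sInf_rmqMatrix [CompleteLattice α] {n d m q z : ℕ}
    (hα : (m, q, z) ∈ Iset n d) (f : ℕ × ℕ × ℕ → α) :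
    sInf {x | ∃ a ∈ Pred n (m, q, z), x = f a} =
      sInf {x | ∃ i j : ℕ, m ≤ i ∧ i ≤ d / 2 ∧ j ≤ m - z ∧ x = rmqMatrix n d f i j} := by
  refine (sInf_eq_of_subset_of_subset_insert_top ?_ ?_).symm
  · rintro _ ⟨a, ha, rfl⟩
    obtain ⟨ha', hm, hz⟩ := (mem_pred_iff hα).1 ha
    have hd : 2 * a.1 + 2 * a.2.1 + a.2.2 = d := ha'.2.1
    exact ⟨a.1 + a.2.1, a.1, hm, by omega, hz, (rmqMatrix_add_fst f ha').symm⟩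
  · rintro _ ⟨i, j, hmi, -, hjz, rfl⟩
    unfold rmqMatrix
    split_ifs with h
    · exact Or.inr ⟨_, (mem_pred_iff hα).2 ⟨h.1, by simp only; omega, hjz⟩, rfl⟩
    · exact Or.inl rfl

end RangeMinimum

theorem pred_min_eq_rmq_general (n d : ℕ) (C : ℝ)
    (V : ℕ × ℕ × ℕ → EReal) (W : ℕ → ℕ → ℝ)
    (M : ℕ → ℕ → EReal)
    (hM : ∀ i j, M i j =
      if (j, i - j, d - 2 * i) ∈ Iset' n d ∧ j ≤ i ∧ i ≤ d / 2 then
        V (j, i - j, d - 2 * i) + ((C * W (j - (d - 2 * i)) j : ℝ) : EReal)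
      else ⊤)
    (m q z : ℕ) (hα : (m, q, z) ∈ Iset n d) :
    sInf {x : EReal | ∃ a' ∈ Pred n (m, q, z),
        x = V a' + ((C * W (a'.1 - a'.2.2) a'.1 : ℝ) : EReal)} =
    sInf {x : EReal | ∃ i j : ℕ, m ≤ i ∧ i ≤ d / 2 ∧ j ≤ m - z ∧ x = M i j} := by
  have hM' : M = rmqMatrix n d fun a => V a + ((C * W (a.1 - a.2.2) a.1 : ℝ) : EReal) :=
    funext₂ hM
  rw [hM']
  exact sInf_pred_eq_sInf_rmqMatrix hα _

/-- For α = (m;p;z) ∈ I(d), the minimization of V(α') + C·W_{m'−z',m'} over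
predecessors α' ∈ P(α) equals the rectangular range minimum query
min{ M_{i,j} : m ≤ i ≤ r, 0 ≤ j ≤ m−z } in the matrix M defined by the change
of variables j = m', i = m'+p', z' = d−2i (invalid entries being ∞). -/
theorem pred_min_eq_rmq (n d : ℕ) (C : ℝ) (hC : 0 ≤ C) (p : ℕ → ℝ)
    (V : ℕ × ℕ × ℕ → EReal) (W : ℕ → ℕ → ℝ)
    (hW : ∀ a b, W a b = ∑ j ∈ Finset.Ioc a b, p j)
    (M : ℕ → ℕ → EReal)
    (hM : ∀ i j, M i j =
      if (j, i - j, d - 2 * i) ∈ Iset' n d ∧ j ≤ i ∧ i ≤ d / 2 then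
        V (j, i - j, d - 2 * i) + ((C * W (j - (d - 2 * i)) j : ℝ) : EReal)
      else ⊤)
    (m q z : ℕ) (hα : (m, q, z) ∈ Iset n d) :
    sInf {x : EReal | ∃ a' ∈ Pred n (m, q, z),
        x = V a' + ((C * W (a'.1 - a'.2.2) a'.1 : ℝ) : EReal)} =
    sInf {x : EReal | ∃ i j : ℕ, m ≤ i ∧ i ≤ d / 2 ∧ j ≤ m - z ∧ x = M i j} :=
  pred_min_eq_rmq_general n d C V W M hM m q z hα
end
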